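/- arXiv:2104.04949 — 4 statements merged into one kernel-verified Lean document; each statement's English description precedes it below -/
import Mathlib

section
/- For p > 1, real numbers α, β with -1 < α, β < p-1, and q the conjugate exponent of p, the sum W¹(n) = ∑_{m=1}^∞ (m+n)^{-(1+(β-α)/p)} · n^{(1+α)/q} / m^{1-(1+β)/p} satisfies W¹(n) ≤ B((1+β)/p, 1-(1+α)/p) · n^α for all n ∈ ℕ, where B is the Beta function. -/
/-!
The summand equals `n ^ (α + d) · K(m + 1)` with `c = (1 + β)/p`, `d = 1 - (1 + α)/p` and
`K(x) = x ^ (c - 1) / (n + x) ^ (c + d)`. Since `c ≤ 1`, `K` is decreasing on `(0, ∞)`, so the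
sum over `m ≥ 1` is at most `∫₀^∞ K`, and the substitution `x = n t` turns that integral into
`n ^ (-d) · B(c, d)`.
-/

open MeasureTheory Set

/-- The integrand of `B(a, b) = ∫₀^∞ t ^ (a - 1) / (1 + t) ^ (a + b) dt`, dilated by `s`. -/
noncomputable def betaKernel (a b s x : ℝ) : ℝ := x ^ (a - 1) / (s + x) ^ (a + b)

section betaKernel

variable {a b s : ℝ}

lemma betaKernel_nonneg (hs : 0 ≤ s) {x : ℝ} (hx : 0 ≤ x) : 0 ≤ betaKernel a b s x := by
  unfold betaKernel; positivity

lemma antitoneOn_betaKernel (ha : a ≤ 1) (hab : 0 ≤ a + b) (hs : 0 ≤ s) :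
    AntitoneOn (betaKernel a b s) (Ioi 0) := by
  intro x (hx : 0 < x) y (hy : 0 < y) hxy
  unfold betaKernel
  have hnum : y ^ (a - 1) ≤ x ^ (a - 1) := Real.rpow_le_rpow_of_nonpos hx hxy (by linarith)
  have hden : (s + x) ^ (a + b) ≤ (s + y) ^ (a + b) := by gcongr
  gcongr

lemma integrableOn_betaKernel (ha : 0 < a) (hb : 0 < b) (hs : 0 < s) :
    IntegrableOn (betaKernel a b s) (Ioi 0) := by
  have hmeas : Measurable (betaKernel a b s) := by unfold betaKernel; fun_prop
  rw [← Ioc_union_Ioi_eq_Ioi zero_le_one]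
  refine IntegrableOn.union ?_ ?_
  · have hint : IntegrableOn (fun x : ℝ => x ^ (a - 1) / s ^ (a + b)) (Ioc 0 1) := by
      refine Integrable.div_const ?_ _
      exact (intervalIntegrable_iff_integrableOn_Ioc_of_le zero_le_one).1
        (intervalIntegral.intervalIntegrable_rpow' (by linarith))
    refine hint.mono' hmeas.aestronglyMeasurable.restrict ?_
    filter_upwards [ae_restrict_mem measurableSet_Ioc] with x hx
    obtain ⟨hx0, -⟩ := hx
    rw [Real.norm_of_nonneg (betaKernel_nonneg hs.le hx0.le), betaKernel]
    gcongr
    linarith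
  · have hint : IntegrableOn (fun x : ℝ => x ^ (-1 - b)) (Ioi 1) :=
      integrableOn_Ioi_rpow_of_lt (by linarith) one_pos
    refine hint.mono' hmeas.aestronglyMeasurable.restrict ?_
    filter_upwards [ae_restrict_mem measurableSet_Ioi] with x (hx : 1 < x)
    have hx0 : 0 < x := one_pos.trans hx
    rw [Real.norm_of_nonneg (betaKernel_nonneg hs.le hx0.le), betaKernel,
      show -1 - b = (a - 1) - (a + b) by ring, Real.rpow_sub hx0 (a - 1)]
    gcongr
    linarith

lemma betaKernel_mul_left (hs : 0 < s) {t : ℝ} (ht : 0 ≤ t) :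
    betaKernel a b s (s * t) = s ^ (-1 - b) * betaKernel a b 1 t := by
  unfold betaKernel
  rw [show s + s * t = s * (1 + t) by ring, Real.mul_rpow hs.le ht,
    Real.mul_rpow hs.le (by linarith), mul_div_mul_comm, ← Real.rpow_sub hs]
  ring_nf

lemma integral_betaKernel (hs : 0 < s) :
    ∫ x in Ioi 0, betaKernel a b s x = s ^ (-b) * ∫ t in Ioi 0, betaKernel a b 1 t := by
  have hscale := integral_comp_mul_left_Ioi (betaKernel a b s) 0 hs
  rw [mul_zero, setIntegral_congr_fun measurableSet_Ioi
    fun t (ht : 0 < t) => betaKernel_mul_left hs ht.le, integral_const_mul, smul_eq_mul,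
    eq_inv_mul_iff_mul_eq₀ hs.ne'] at hscale
  rw [← hscale, ← mul_assoc, show -b = 1 + (-1 - b) by ring, Real.rpow_add hs, Real.rpow_one]

end betaKernel

/-- `AntitoneOn.tsum_add_one_le_integral` needs antitonicity on `[0, ∞)`, which `betaKernel` lacks:
its singularity at `0` carries the junk value `0 ^ (a - 1) = 0`. -/
lemma tsum_add_one_le_integral_Ioi {f : ℝ → ℝ} (anti : AntitoneOn f (Ioi 0))
    (integrable : IntegrableOn f (Ioi 0)) (nonneg : ∀ t ∈ Ioi 0, 0 ≤ f t) :
    ∑' n : ℕ, f (n + 1) ≤ ∫ x in Ioi 0, f x := by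
  have anti₁ : AntitoneOn f (Ici 1) := anti.mono fun x (hx : 1 ≤ x) => one_pos.trans_le hx
  have integrable₁ : IntegrableOn f (Ioi 1) := integrable.mono_set (Ioi_subset_Ioi zero_le_one)
  have nonneg₁ : ∀ t ∈ Ioi (1 : ℝ), 0 ≤ f t := fun t (ht : 1 < t) => nonneg t (one_pos.trans ht)
  have hsummable : Summable fun n : ℕ => f (n + 1) := by
    have := (summable_nat_add_iff 1).2 (AntitoneOn.summable_of_integrableOn_Ioi (N := 1)
      (mod_cast anti₁) (mod_cast integrable₁) (mod_cast nonneg₁))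
    exact_mod_cast this
  have hfirst : f 1 ≤ ∫ x in Ioc 0 1, f x := by
    have := setIntegral_ge_of_const_le_real (c := f 1) measurableSet_Ioc (by simp)
      (fun x (hx : x ∈ Ioc (0 : ℝ) 1) => anti hx.1 (show (0 : ℝ) < 1 from one_pos) hx.2)
      (integrable.mono_set Ioc_subset_Ioi_self)
    simpa using this
  have hrest : ∑' n : ℕ, f (n + 1 + 1) ≤ ∫ x in Ioi 1, f x := by
    have := AntitoneOn.tsum_comp_add_le_integral 1
      (mod_cast anti₁) (mod_cast integrable₁) (mod_cast nonneg₁)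
    push_cast at this
    exact this
  rw [hsummable.tsum_eq_zero_add, ← Ioc_union_Ioi_eq_Ioi zero_le_one,
    setIntegral_union Ioc_disjoint_Ioi_same measurableSet_Ioi
      (integrable.mono_set Ioc_subset_Ioi_self) integrable₁]
  push_cast
  gcongr
  simpa using hfirst

theorem stmt_3_general (p q α β : ℝ) (hp : 1 < p) (hpq : 1/p + 1/q = 1)
    (hα' : α < p - 1) (hβ : -1 < β) (hβ' : β < p - 1)
    (n : ℕ) (hn : 1 ≤ n) :
    (∑' m : ℕ, ((m : ℝ) + 1 + (n : ℝ)) ^ (-(1 + (β - α)/p)) *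
        ((n : ℝ) ^ ((1 + α)/q) / ((m : ℝ) + 1) ^ (1 - (1 + β)/p)))
      ≤ (∫ t in Set.Ioi (0:ℝ),
            t ^ ((1 + β)/p - 1) / (1 + t) ^ ((1 + β)/p + (1 - (1 + α)/p))) * (n : ℝ) ^ α := by
  have hp0 : 0 < p := by linarith
  set c := (1 + β) / p
  set d := 1 - (1 + α) / p
  have hc0 : 0 < c := div_pos (by linarith) hp0
  have hc1 : c ≤ 1 := (div_le_one hp0).2 (by linarith)
  have hd0 : 0 < d := sub_pos.2 ((div_lt_one hp0).2 (by linarith))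
  have hn0 : (0 : ℝ) < n := by exact_mod_cast hn
  have hsummand (m : ℕ) : ((m : ℝ) + 1 + n) ^ (-(1 + (β - α)/p)) *
      ((n : ℝ) ^ ((1 + α)/q) / ((m : ℝ) + 1) ^ (1 - c)) =
      (n : ℝ) ^ (α + d) * betaKernel c d n (m + 1) := by
    have hm : (0 : ℝ) < m + 1 := by positivity
    rw [show -(1 + (β - α)/p) = -(c + d) by ring,
      show (1 + α)/q = α + d by rw [div_eq_mul_one_div, show 1/q = 1 - 1/p by linarith]; ring,
      betaKernel, show (m : ℝ) + 1 + n = n + (m + 1) by ring, Real.rpow_neg (by positivity),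
      show c - 1 = -(1 - c) by ring, Real.rpow_neg hm.le]
    ring
  calc _ = (n : ℝ) ^ (α + d) * ∑' m : ℕ, betaKernel c d n (m + 1) := by
        simp_rw [hsummand]; exact tsum_mul_left
    _ ≤ (n : ℝ) ^ (α + d) * ∫ x in Ioi 0, betaKernel c d n x := by
        gcongr
        exact tsum_add_one_le_integral_Ioi (antitoneOn_betaKernel hc1 (by linarith) hn0.le)
          (integrableOn_betaKernel hc0 hd0 hn0) fun t ht => betaKernel_nonneg hn0.le (le_of_lt ht)
    _ = (∫ t in Ioi 0, betaKernel c d 1 t) * (n : ℝ) ^ α := by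
        rw [integral_betaKernel hn0, ← mul_assoc, ← Real.rpow_add hn0]
        ring_nf

theorem stmt_3 (p q α β : ℝ) (hp : 1 < p) (hpq : 1/p + 1/q = 1)
    (hα : -1 < α) (hα' : α < p - 1) (hβ : -1 < β) (hβ' : β < p - 1)
    (n : ℕ) (hn : 1 ≤ n) :
    (∑' m : ℕ, ((m : ℝ) + 1 + (n : ℝ)) ^ (-(1 + (β - α)/p)) *
        ((n : ℝ) ^ ((1 + α)/q) / ((m : ℝ) + 1) ^ (1 - (1 + β)/p)))
      ≤ (∫ t in Set.Ioi (0:ℝ),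
            t ^ ((1 + β)/p - 1) / (1 + t) ^ ((1 + β)/p + (1 - (1 + α)/p))) * (n : ℝ) ^ α :=
  stmt_3_general p q α β hp hpq hα' hβ hβ' n hn
end

section
/- For p > 1, real numbers α, β with -1 < α, β < p-1, and q the conjugate exponent of p, the sum W²(m) = ∑_{n=1}^∞ (m+n)^{-(1+(β-α)/p)} · m^{(q-1)(1-(1+β)/p)} / n^{(1+α)/p} satisfies W²(m) ≤ B((1+β)/p, 1-(1+α)/p) · m^{(1-q)β} for all m ∈ ℕ. -/
/-!
The function `x ↦ x ^ (v - 1) / (m + x) ^ (u + v)` decreases on `(0, ∞)`, so its values at the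
integers `n + 1` sum to at most its integral over `(0, ∞)`. The substitution `x = m t` turns that
integral into `m ^ (-u)` times `∫ t ^ (v - 1) / (1 + t) ^ (u + v)`, which equals `B(u, v)` by
`t ↦ 1 / t`. With `u = (1 + β) / p` and `v = 1 - (1 + α) / p` the summand of `W²(m)` is
`m ^ ((q - 1) (1 - u))` times this function at `n + 1`, and `p q = p + q` collapses the power of `m`
to `(1 - q) β`.
-/

open MeasureTheory Real Set

noncomputable def betaIntegralIoi (u v : ℝ) : ℝ :=
  ∫ t in Ioi 0, t ^ (u - 1) / (1 + t) ^ (u + v)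

theorem betaIntegralIoi_comm (u v : ℝ) : betaIntegralIoi u v = betaIntegralIoi v u := by
  rw [betaIntegralIoi, ← integral_comp_rpow_Ioi _ (p := -1) (by norm_num), betaIntegralIoi]
  refine setIntegral_congr_fun measurableSet_Ioi fun x (hx : 0 < x) => ?_
  have h1x : 1 + x ^ (-1 : ℝ) = x⁻¹ * (1 + x) := by
    rw [rpow_neg_one]; field_simp; ring
  rw [smul_eq_mul, h1x, mul_rpow (inv_nonneg.2 hx.le) (by positivity), inv_rpow hx.le,
    ← rpow_mul hx.le, ← rpow_neg hx.le]
  simp only [abs_neg, abs_one, one_mul]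
  have hpow : x ^ (-1 - 1 : ℝ) * x ^ (-1 * (u - 1)) = x ^ (v - 1) * x ^ (-(u + v)) := by
    rw [← rpow_add hx, ← rpow_add hx]; ring_nf
  rw [← mul_div_assoc, hpow, add_comm v u, mul_comm (x ^ (-(u + v))),
    mul_div_mul_right _ _ (by positivity)]

theorem integral_rpow_div_add_rpow {M : ℝ} (hM : 0 < M) (u v : ℝ) :
    ∫ x in Ioi 0, x ^ (v - 1) / (M + x) ^ (u + v) = M ^ (-u) * betaIntegralIoi u v := by
  have hscale : ∀ x ∈ Ioi (0 : ℝ), (M * x) ^ (v - 1) / (M + M * x) ^ (u + v)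
      = M ^ (-u - 1) * (x ^ (v - 1) / (1 + x) ^ (u + v)) := fun x (hx : 0 < x) => by
    have hMpow : M ^ (v - 1) = M ^ (-u - 1) * M ^ (u + v) := by rw [← rpow_add hM]; ring_nf
    rw [show M + M * x = M * (1 + x) by ring, mul_rpow hM.le hx.le, mul_rpow hM.le (by positivity),
      hMpow]
    field_simp
  have h := integral_comp_mul_left_Ioi (fun x => x ^ (v - 1) / (M + x) ^ (u + v)) 0 hM
  rw [mul_zero, setIntegral_congr_fun measurableSet_Ioi hscale, integral_const_mul, smul_eq_mul,
    eq_inv_mul_iff_mul_eq₀ hM.ne'] at h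
  have hMu : M * M ^ (-u - 1) = M ^ (-u) := by rw [mul_comm, ← rpow_add_one hM.ne']; ring_nf
  rw [← h, ← mul_assoc, hMu, betaIntegralIoi_comm, betaIntegralIoi, add_comm v u]

theorem integrableOn_rpow_div_add_rpow {M u v : ℝ} (hM : 0 < M) (hu : 0 < u) (hv : 0 < v) :
    IntegrableOn (fun x => x ^ (v - 1) / (M + x) ^ (u + v)) (Ioi 0) := by
  have hmeas : AEStronglyMeasurable (fun x : ℝ => x ^ (v - 1) / (M + x) ^ (u + v)) :=
    (by fun_prop : Measurable _).aestronglyMeasurable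
  have hnorm : ∀ x ∈ Ioi (0 : ℝ),
      ‖x ^ (v - 1) / (M + x) ^ (u + v)‖ = x ^ (v - 1) / (M + x) ^ (u + v) := fun x (hx : 0 < x) =>
    Real.norm_of_nonneg (by positivity)
  have hnear : IntegrableOn (fun x => x ^ (v - 1) / (M + x) ^ (u + v)) (Ioc 0 1) := by
    have hdom : IntegrableOn (fun x : ℝ => x ^ (v - 1) / M ^ (u + v)) (Ioc 0 1) :=
      ((intervalIntegrable_iff_integrableOn_Ioc_of_le zero_le_one).1
        (intervalIntegral.intervalIntegrable_rpow' (by linarith))).div_const _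
    refine hdom.mono' hmeas.restrict ((ae_restrict_iff' measurableSet_Ioc).2 (.of_forall ?_))
    rintro x ⟨hx0, -⟩
    rw [hnorm x hx0]
    gcongr
    linarith
  have hfar : IntegrableOn (fun x => x ^ (v - 1) / (M + x) ^ (u + v)) (Ioi 1) := by
    have hdom : IntegrableOn (fun x : ℝ => x ^ (-u - 1)) (Ioi 1) :=
      integrableOn_Ioi_rpow_of_lt (by linarith) zero_lt_one
    refine hdom.mono' hmeas.restrict ((ae_restrict_iff' measurableSet_Ioi).2 (.of_forall ?_))
    intro x (hx : 1 < x)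
    have hx0 : 0 < x := by linarith
    rw [hnorm x hx0, show -u - 1 = (v - 1) - (u + v) by ring, rpow_sub hx0 (v - 1)]
    gcongr
    linarith
  simpa only [Ioc_union_Ioi_eq_Ioi zero_le_one] using hnear.union hfar

theorem antitoneOn_rpow_div_add_rpow {M u v : ℝ} (hM : 0 ≤ M) (huv : 0 ≤ u + v) (hv : v ≤ 1) :
    AntitoneOn (fun x => x ^ (v - 1) / (M + x) ^ (u + v)) (Ioi 0) := by
  intro x (hx : 0 < x) y (hy : 0 < y) hxy
  exact div_le_div₀ (by positivity) (rpow_le_rpow_of_nonpos hx hxy (by linarith))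
    (by positivity) (rpow_le_rpow (by positivity) (by linarith) huv)

theorem tsum_le_integral_Ioi_of_antitoneOn {f : ℝ → ℝ} (hf : IntegrableOn f (Ioi 0))
    (hmono : AntitoneOn f (Ioi 0)) (hpos : ∀ x ∈ Ioi 0, 0 ≤ f x) :
    ∑' n : ℕ, f (n + 1) ≤ ∫ x in Ioi 0, f x := by
  have hint : ∀ k : ℕ, IntervalIntegrable f volume k (k + 1) := fun k =>
    (intervalIntegrable_iff_integrableOn_Ioc_of_le (by linarith)).2
      (hf.mono_set fun x hx => (Nat.cast_nonneg k).trans_lt hx.1)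
  refine Real.tsum_le_of_sum_range_le (fun n => hpos _ (mem_Ioi.2 n.cast_add_one_pos)) fun N => ?_
  calc ∑ k ∈ Finset.range N, f (k + 1)
      ≤ ∑ k ∈ Finset.range N, ∫ x in (k : ℝ)..k + 1, f x := by
        refine Finset.sum_le_sum fun k _ => ?_
        have hk := intervalIntegral.integral_mono_on_of_le_Ioo (by linarith)
          intervalIntegrable_const (hint k) fun x hx =>
            hmono ((Nat.cast_nonneg k).trans_lt hx.1) (mem_Ioi.2 k.cast_add_one_pos) hx.2.le
        simpa using hk
    _ = ∫ x in (0 : ℝ)..N, f x := by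
        simpa using intervalIntegral.sum_integral_adjacent_intervals (a := fun k : ℕ => (k : ℝ))
          fun k _ => by simpa using hint k
    _ ≤ ∫ x in Ioi 0, f x := by
        rw [intervalIntegral.integral_of_le (Nat.cast_nonneg N)]
        exact setIntegral_mono_set hf ((ae_restrict_iff' measurableSet_Ioi).2 (.of_forall hpos))
          Ioc_subset_Ioi_self.eventuallyLE

theorem tsum_rpow_div_add_rpow_le {M u v : ℝ} (hM : 0 < M) (hu : 0 < u) (hv : 0 < v)
    (hv1 : v ≤ 1) :
    ∑' n : ℕ, ((n : ℝ) + 1) ^ (v - 1) / (M + (n + 1)) ^ (u + v) ≤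
      M ^ (-u) * betaIntegralIoi u v := by
  rw [← integral_rpow_div_add_rpow hM u v]
  exact tsum_le_integral_Ioi_of_antitoneOn (integrableOn_rpow_div_add_rpow hM hu hv)
    (antitoneOn_rpow_div_add_rpow hM.le (by linarith) hv1) fun x (hx : 0 < x) => by positivity

theorem stmt_4_general (p q α β : ℝ) (hp : 1 < p) (hpq : 1/p + 1/q = 1)
    (hα : -1 < α) (hα' : α < p - 1) (hβ : -1 < β)
    (m : ℕ) (hm : 1 ≤ m) :
    (∑' n : ℕ, ((m : ℝ) + (n : ℝ) + 1) ^ (-(1 + (β - α)/p)) *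
        ((m : ℝ) ^ ((q - 1) * (1 - (1 + β)/p)) / ((n : ℝ) + 1) ^ ((1 + α)/p)))
      ≤ (∫ t in Set.Ioi (0:ℝ),
            t ^ ((1 + β)/p - 1) / (1 + t) ^ ((1 + β)/p + (1 - (1 + α)/p))) *
          (m : ℝ) ^ ((1 - q) * β) := by
  have hpq' : p.HolderConjugate q := Real.holderConjugate_iff.2 ⟨hp, by simpa using hpq⟩
  have hM : (0 : ℝ) < m := by exact_mod_cast hm
  have hu : 0 < (1 + β) / p := div_pos (by linarith) hpq'.pos
  have hv : 0 < 1 - (1 + α) / p := sub_pos.2 ((div_lt_one hpq'.pos).2 (by linarith))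
  have hv1 : 1 - (1 + α) / p ≤ 1 := sub_le_self _ (div_nonneg (by linarith) hpq'.pos.le)
  have hexp : (q - 1) * (1 - (1 + β) / p) + -((1 + β) / p) = (1 - q) * β := by
    field_simp [hpq'.ne_zero]
    linear_combination (1 + β) * hpq'.mul_eq_add
  set u := (1 + β) / p
  set v := 1 - (1 + α) / p
  set e := (q - 1) * (1 - u)
  have hterm (n : ℕ) : ((m : ℝ) + n + 1) ^ (-(1 + (β - α) / p)) *
        ((m : ℝ) ^ e / ((n : ℝ) + 1) ^ ((1 + α) / p))
      = (m : ℝ) ^ e * (((n : ℝ) + 1) ^ (v - 1) / (m + (n + 1)) ^ (u + v)) := by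
    rw [show 1 + (β - α) / p = u + v by ring, show v - 1 = -((1 + α) / p) by ring,
      rpow_neg (by positivity), rpow_neg n.cast_add_one_pos.le, add_assoc]
    ring
  calc ∑' n : ℕ, _
      = (m : ℝ) ^ e * ∑' n : ℕ, ((n : ℝ) + 1) ^ (v - 1) / (m + (n + 1)) ^ (u + v) := by
        simp_rw [hterm]; exact tsum_mul_left
    _ ≤ (m : ℝ) ^ e * ((m : ℝ) ^ (-u) * betaIntegralIoi u v) := by
        gcongr; exact tsum_rpow_div_add_rpow_le hM hu hv hv1
    _ = _ := by rw [← hexp, rpow_add hM, betaIntegralIoi]; ring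

theorem stmt_4 (p q α β : ℝ) (hp : 1 < p) (hpq : 1/p + 1/q = 1)
    (hα : -1 < α) (hα' : α < p - 1) (hβ : -1 < β) (hβ' : β < p - 1)
    (m : ℕ) (hm : 1 ≤ m) :
    (∑' n : ℕ, ((m : ℝ) + (n : ℝ) + 1) ^ (-(1 + (β - α)/p)) *
        ((m : ℝ) ^ ((q - 1) * (1 - (1 + β)/p)) / ((n : ℝ) + 1) ^ ((1 + α)/p)))
      ≤ (∫ t in Set.Ioi (0:ℝ),
            t ^ ((1 + β)/p - 1) / (1 + t) ^ ((1 + β)/p + (1 - (1 + α)/p))) *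
          (m : ℝ) ^ ((1 - q) * β) :=
  stmt_4_general p q α β hp hpq hα hα' hβ m hm
end

section
/- Let p > 1, -1 < α, β < p-1, and suppose there is a constant C > 0 such that the moments of a positive Borel measure μ on [0,1) satisfy μ[n] ≤ C n^{-1-(β-α)/p} for all n ∈ ℕ. Then the operator H_μ(a)(m) = ∑_{n=1}^∞ μ[m+n] a_n is bounded from l^p_α to l^p_β: there exists C' > 0 such that (∑_{m=1}^∞ m^β |H_μ(a)(m)|^p)^{1/p} ≤ C' (∑_{n=1}^∞ n^α |a_n|^p)^{1/p} for every sequence a with ∑ n^α |a_n|^p < ∞. -/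
/-!
The moment condition dominates the matrix of `H_μ` entrywise by `C (m + n + 2) ^ (-s)` with
`s = 1 + (β - α) / p`, so it suffices to bound this Hilbert-type matrix from `ℓ^p_α` to `ℓ^p_β`.
That is a Schur test with the power weights `φ n = (n + 1) ^ (-(1 + α) / (p q))` and
`ψ m = (m + 1) ^ (-(1 + β) / p)`, `q` the conjugate exponent:
both Schur sums are of the form `∑ n, (m + n + 2) ^ (-s) * (n + 1) ^ t ≲ (m + 1) ^ (t - s + 1)`
with `-1 < t < s - 1`, which follows by comparing the terms `n ≤ m` and the tail `n > m` with
integrals of `x ^ t` and `x ^ (t - s)`.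
-/

open MeasureTheory Finset ENNReal

namespace ENNReal

theorem ofReal_rpow_rpow {x : ℝ} (hx : 0 ≤ x) (a : ℝ) {r : ℝ} (hr : 0 ≤ r) :
    ENNReal.ofReal (x ^ a) ^ r = ENNReal.ofReal (x ^ (a * r)) := by
  rw [ENNReal.ofReal_rpow_of_nonneg (Real.rpow_nonneg hx a) hr, ← Real.rpow_mul hx]

theorem inner_le_Lp_mul_Lq_tsum {ι : Type*} (f g : ι → ℝ≥0∞) {p q : ℝ}
    (hpq : p.HolderConjugate q) :
    ∑' i, f i * g i ≤ (∑' i, f i ^ p) ^ (1 / p) * (∑' i, g i ^ q) ^ (1 / q) := by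
  rw [ENNReal.tsum_eq_iSup_sum]
  refine iSup_le fun s => (inner_le_Lp_mul_Lq s f g hpq).trans (mul_le_mul' ?_ ?_)
  · exact rpow_le_rpow (ENNReal.sum_le_tsum s) hpq.one_div_nonneg
  · exact rpow_le_rpow (ENNReal.sum_le_tsum s) hpq.symm.one_div_nonneg

theorem rpow_tsum_mul_le_weighted {ι : Type*} {p q : ℝ} (hpq : p.HolderConjugate q)
    {K φ : ι → ℝ≥0∞} (hφ₀ : ∀ i, φ i ≠ 0) (hφ_top : ∀ i, φ i ≠ ∞) (b : ι → ℝ≥0∞) :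
    (∑' i, K i * b i) ^ p
      ≤ (∑' i, K i * φ i ^ q) ^ (p - 1) * ∑' i, K i * (φ i ^ p)⁻¹ * b i ^ p := by
  have hp := hpq.pos
  have hq := hpq.symm.pos
  have hsplit : ∀ i, K i * b i = (K i ^ (1 / q) * φ i) * (K i ^ (1 / p) * (φ i)⁻¹ * b i) := by
    intro i
    calc K i * b i = K i ^ (1 / q + 1 / p) * (φ i * (φ i)⁻¹) * b i := by
          rw [ENNReal.mul_inv_cancel (hφ₀ i) (hφ_top i), one_div, one_div, add_comm,
            hpq.inv_add_inv_eq_one, rpow_one, mul_one]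
      _ = _ := by rw [rpow_add_of_nonneg _ _ (by positivity) (by positivity)]; ring
  have hq_pow : ∀ i, (K i ^ (1 / q) * φ i) ^ q = K i * φ i ^ q := fun i => by
    rw [mul_rpow_of_nonneg _ _ hq.le, ← rpow_mul, one_div_mul_cancel hq.ne', rpow_one]
  have hp_pow : ∀ i, (K i ^ (1 / p) * (φ i)⁻¹ * b i) ^ p = K i * (φ i ^ p)⁻¹ * b i ^ p :=
    fun i => by
      rw [mul_rpow_of_nonneg _ _ hp.le, mul_rpow_of_nonneg _ _ hp.le, ← rpow_mul,
        one_div_mul_cancel hp.ne', rpow_one, inv_rpow]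
  calc (∑' i, K i * b i) ^ p
      ≤ ((∑' i, K i * φ i ^ q) ^ (1 / q) *
          (∑' i, K i * (φ i ^ p)⁻¹ * b i ^ p) ^ (1 / p)) ^ p := by
        gcongr
        simp_rw [hsplit, ← hq_pow, ← hp_pow]
        exact inner_le_Lp_mul_Lq_tsum _ _ hpq.symm
    _ = _ := by
        rw [mul_rpow_of_nonneg _ _ hp.le, ← rpow_mul, ← rpow_mul, one_div_mul_cancel hp.ne',
          rpow_one, one_div_mul_eq_div, hpq.div_conj_eq_sub_one]

theorem schur_test {ι κ : Type*} {p q : ℝ} (hpq : p.HolderConjugate q) {K : κ → ι → ℝ≥0∞}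
    {v ψ : κ → ℝ≥0∞} {w φ : ι → ℝ≥0∞} {c₁ c₂ : ℝ≥0∞}
    (hφ₀ : ∀ i, φ i ≠ 0) (hφ_top : ∀ i, φ i ≠ ∞)
    (h₁ : ∀ k, ∑' i, K k i * φ i ^ q ≤ c₁ * ψ k)
    (h₂ : ∀ i, ∑' k, v k * ψ k ^ (p - 1) * K k i ≤ c₂ * w i * φ i ^ p) (b : ι → ℝ≥0∞) :
    ∑' k, v k * (∑' i, K k i * b i) ^ p ≤ c₁ ^ (p - 1) * c₂ * ∑' i, w i * b i ^ p := by
  have hp1 : 0 ≤ p - 1 := hpq.sub_one_pos.le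
  have hφp : ∀ i, φ i ^ p * (φ i ^ p)⁻¹ = 1 := fun i =>
    ENNReal.mul_inv_cancel (rpow_pos (pos_iff_ne_zero.2 (hφ₀ i)) (hφ_top i)).ne'
      (rpow_ne_top_of_nonneg hpq.pos.le (hφ_top i))
  calc ∑' k, v k * (∑' i, K k i * b i) ^ p
      ≤ ∑' k, v k * ((c₁ * ψ k) ^ (p - 1) * ∑' i, K k i * (φ i ^ p)⁻¹ * b i ^ p) := by
        gcongr with k
        exact (rpow_tsum_mul_le_weighted hpq hφ₀ hφ_top b).trans (by gcongr; exact h₁ k)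
    _ = c₁ ^ (p - 1) *
          ∑' i, (∑' k, v k * ψ k ^ (p - 1) * K k i) * ((φ i ^ p)⁻¹ * b i ^ p) := by
        rw [← ENNReal.tsum_mul_left]
        simp_rw [← ENNReal.tsum_mul_right, ← ENNReal.tsum_mul_left]
        rw [ENNReal.tsum_comm]
        refine tsum_congr fun i => tsum_congr fun k => ?_
        rw [mul_rpow_of_nonneg _ _ hp1]
        ring
    _ ≤ c₁ ^ (p - 1) * ∑' i, c₂ * w i * φ i ^ p * ((φ i ^ p)⁻¹ * b i ^ p) := by
        gcongr with i
        exact h₂ i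
    _ = _ := by
        rw [← ENNReal.tsum_mul_left, ← ENNReal.tsum_mul_left]
        refine tsum_congr fun i => ?_
        calc c₁ ^ (p - 1) * (c₂ * w i * φ i ^ p * ((φ i ^ p)⁻¹ * b i ^ p))
            = c₁ ^ (p - 1) * c₂ * (w i * b i ^ p) * (φ i ^ p * (φ i ^ p)⁻¹) := by ring
          _ = _ := by rw [hφp, mul_one, mul_assoc]

end ENNReal

theorem tsum_le_of_tsum_ofReal_le {ι : Type*} {f : ι → ℝ} (hf : ∀ i, 0 ≤ f i) {B : ℝ}
    (hB : 0 ≤ B) (h : ∑' i, ENNReal.ofReal (f i) ≤ ENNReal.ofReal B) : ∑' i, f i ≤ B := by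
  have h_toReal := ENNReal.tsum_toReal_eq fun i => ENNReal.ofReal_ne_top (r := f i)
  simp only [ENNReal.toReal_ofReal (hf _)] at h_toReal
  exact h_toReal ▸ ENNReal.toReal_le_of_le_ofReal hB h

theorem rpow_tsum_mul_rpow_le_of_enorm {ι κ : Type*} {p c : ℝ} (hp : 0 < p) (hc : 0 ≤ c)
    {u x : κ → ℝ} {v y : ι → ℝ} (hu : ∀ k, 0 ≤ u k) (hv : ∀ i, 0 ≤ v i)
    (hy : Summable fun i => v i * |y i| ^ p)
    (h : ∑' k, ENNReal.ofReal (u k) * ‖x k‖ₑ ^ p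
      ≤ ENNReal.ofReal c * ∑' i, ENNReal.ofReal (v i) * ‖y i‖ₑ ^ p) :
    (∑' k, u k * |x k| ^ p) ^ (1 / p) ≤ c ^ (1 / p) * (∑' i, v i * |y i| ^ p) ^ (1 / p) := by
  have hofReal : ∀ (r z : ℝ), 0 ≤ r → ENNReal.ofReal r * ‖z‖ₑ ^ p = ENNReal.ofReal (r * |z| ^ p) :=
    fun r z hr => by
      rw [Real.enorm_eq_ofReal_abs, ENNReal.ofReal_rpow_of_nonneg (abs_nonneg _) hp.le,
        ENNReal.ofReal_mul hr]
  simp only [hofReal _ _ (hu _), hofReal _ _ (hv _)] at h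
  have hvy : ∀ i, 0 ≤ v i * |y i| ^ p := fun i => mul_nonneg (hv i) (by positivity)
  have hux : ∀ k, 0 ≤ u k * |x k| ^ p := fun k => mul_nonneg (hu k) (by positivity)
  have hY : 0 ≤ ∑' i, v i * |y i| ^ p := tsum_nonneg hvy
  rw [← ENNReal.ofReal_tsum_of_nonneg hvy hy, ← ENNReal.ofReal_mul hc] at h
  rw [← Real.mul_rpow hc hY]
  exact Real.rpow_le_rpow (tsum_nonneg hux)
    (tsum_le_of_tsum_ofReal_le hux (mul_nonneg hc hY) h) (by positivity)

theorem enorm_tsum_mul_le {ι 𝕜 : Type*} [NormedDivisionRing 𝕜] {T a : ι → 𝕜} {K : ι → ℝ≥0∞}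
    (hT : ∀ i, ‖T i‖ₑ ≤ K i) : ‖∑' i, T i * a i‖ₑ ≤ ∑' i, K i * ‖a i‖ₑ :=
  enorm_tsum_le_tsum_enorm.trans <| ENNReal.tsum_le_tsum fun i => by
    rw [enorm_mul]; gcongr; exact hT i

theorem sum_range_rpow_le_integral {u x : ℝ} (hu : u ≤ 0) (hx : 0 < x) (N : ℕ) :
    ∑ i ∈ range N, (x + (i + 1)) ^ u ≤ ∫ y in x..x + N, y ^ u := by
  have hanti : AntitoneOn (fun y : ℝ => y ^ u) (Set.Icc x (x + N)) := fun a ha b _ hab =>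
    Real.rpow_le_rpow_of_nonpos (hx.trans_le ha.1) hab hu
  simpa using hanti.sum_le_integral

theorem sum_range_rpow_le_of_lt_neg_one {u x : ℝ} (hu : u < -1) (hx : 0 < x) (N : ℕ) :
    ∑ i ∈ range N, (x + (i + 1)) ^ u ≤ (-(u + 1))⁻¹ * x ^ (u + 1) := by
  have h0 : (0 : ℝ) ∉ Set.uIcc x (x + N) := by
    rw [Set.uIcc_of_le (by simp)]
    exact fun h => hx.not_ge h.1
  refine (sum_range_rpow_le_integral (by linarith) hx N).trans ?_
  rw [integral_rpow (Or.inr ⟨by linarith, h0⟩), ← neg_div_neg_eq, neg_sub, div_eq_inv_mul]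
  have : 0 ≤ (x + N) ^ (u + 1) := Real.rpow_nonneg (by positivity) _
  gcongr
  · exact inv_nonneg.mpr (by linarith)
  · linarith

theorem exists_sum_range_rpow_le {t : ℝ} (ht : -1 < t) :
    ∃ c : ℝ, 0 < c ∧ ∀ m : ℕ,
      ∑ n ∈ range (m + 1), ((n : ℝ) + 1) ^ t ≤ c * ((m : ℝ) + 1) ^ (t + 1) := by
  rcases le_or_gt 0 t with ht₀ | ht₀
  · refine ⟨1, one_pos, fun m => ?_⟩
    calc ∑ n ∈ range (m + 1), ((n : ℝ) + 1) ^ t ≤ ∑ _n ∈ range (m + 1), ((m : ℝ) + 1) ^ t := by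
          gcongr with n hn
          exact_mod_cast Nat.lt_succ_iff.mp (mem_range.mp hn)
      _ = 1 * ((m : ℝ) + 1) ^ (t + 1) := by
          rw [sum_const, card_range, nsmul_eq_mul, Real.rpow_add_one (by positivity)]
          push_cast; ring
  · refine ⟨(t + 1)⁻¹, inv_pos.mpr (by linarith), fun m => ?_⟩
    have hint := sum_range_rpow_le_integral ht₀.le one_pos m
    rw [integral_rpow (Or.inl ht), Real.one_rpow, div_eq_inv_mul] at hint
    have hX : 1 ≤ (1 + (m : ℝ)) ^ (t + 1) := Real.one_le_rpow (by simp) (by linarith)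
    have hinv : 1 ≤ (t + 1)⁻¹ := one_le_inv_iff₀.mpr ⟨by linarith, by linarith⟩
    calc ∑ n ∈ range (m + 1), ((n : ℝ) + 1) ^ t
        = ∑ i ∈ range m, (1 + ((i : ℝ) + 1)) ^ t + 1 := by
          rw [sum_range_succ']
          push_cast
          simp only [zero_add, Real.one_rpow, add_comm (1 : ℝ)]
      _ ≤ (t + 1)⁻¹ * ((1 + m) ^ (t + 1) - 1) + 1 := by gcongr
      _ ≤ (t + 1)⁻¹ * ((m : ℝ) + 1) ^ (t + 1) := by rw [add_comm (m : ℝ)]; nlinarith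

theorem exists_tsum_ofReal_rpow_kernel_le {s t : ℝ} (ht : -1 < t) (hts : t < s - 1) :
    ∃ c : ℝ, 0 < c ∧ ∀ m : ℕ,
      ∑' n : ℕ, ENNReal.ofReal (((m : ℝ) + n + 2) ^ (-s) * ((n : ℝ) + 1) ^ t)
        ≤ ENNReal.ofReal (c * ((m : ℝ) + 1) ^ (t - s + 1)) := by
  obtain ⟨c₁, hc₁, hsum⟩ := exists_sum_range_rpow_le ht
  have hc₂ : 0 < (-(t - s + 1))⁻¹ := inv_pos.mpr (by linarith)
  refine ⟨c₁ + (-(t - s + 1))⁻¹, by positivity, fun m => ?_⟩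
  have hm : (0 : ℝ) < m + 1 := by positivity
  have head : ∑ n ∈ range (m + 1), ((m : ℝ) + n + 2) ^ (-s) * ((n : ℝ) + 1) ^ t
      ≤ c₁ * ((m : ℝ) + 1) ^ (t - s + 1) :=
    calc ∑ n ∈ range (m + 1), ((m : ℝ) + n + 2) ^ (-s) * ((n : ℝ) + 1) ^ t
        ≤ ∑ n ∈ range (m + 1), ((m : ℝ) + 1) ^ (-s) * ((n : ℝ) + 1) ^ t := by
          refine sum_le_sum fun n _ => mul_le_mul_of_nonneg_right ?_ (by positivity)
          exact Real.rpow_le_rpow_of_nonpos hm (by linarith [(n.cast_nonneg : (0 : ℝ) ≤ n)])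
            (by linarith)
      _ ≤ ((m : ℝ) + 1) ^ (-s) * (c₁ * ((m : ℝ) + 1) ^ (t + 1)) := by
          rw [← mul_sum]; gcongr; exact hsum m
      _ = c₁ * ((m : ℝ) + 1) ^ (t - s + 1) := by
          rw [mul_left_comm, ← Real.rpow_add hm]; ring_nf
  have tail : ∀ N, ∑ j ∈ range N,
      ((m : ℝ) + ↑(j + (m + 1)) + 2) ^ (-s) * ((↑(j + (m + 1)) : ℝ) + 1) ^ t
        ≤ (-(t - s + 1))⁻¹ * ((m : ℝ) + 1) ^ (t - s + 1) := by
    intro N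
    refine (sum_le_sum fun j _ => ?_).trans
      (sum_range_rpow_le_of_lt_neg_one (by linarith) hm N)
    have hj : (0 : ℝ) < m + 1 + (j + 1) := by positivity
    calc ((m : ℝ) + ↑(j + (m + 1)) + 2) ^ (-s) * ((↑(j + (m + 1)) : ℝ) + 1) ^ t
        ≤ ((m : ℝ) + 1 + (j + 1)) ^ (-s) * ((m : ℝ) + 1 + (j + 1)) ^ t := by
          push_cast
          rw [show (j : ℝ) + (m + 1) + 1 = m + 1 + (j + 1) by ring]
          refine mul_le_mul_of_nonneg_right ?_ (by positivity)
          exact Real.rpow_le_rpow_of_nonpos hj (by linarith [(m.cast_nonneg : (0 : ℝ) ≤ m)])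
            (by linarith)
      _ = ((m : ℝ) + 1 + (j + 1)) ^ (t - s) := by rw [← Real.rpow_add hj]; ring_nf
  rw [← Summable.sum_add_tsum_nat_add' (k := m + 1) ENNReal.summable, add_mul,
    ENNReal.ofReal_add (by positivity) (by positivity)]
  gcongr
  · rw [← ENNReal.ofReal_sum_of_nonneg fun n _ => by positivity]
    exact ENNReal.ofReal_le_ofReal head
  · refine ENNReal.tsum_le_of_sum_range_le fun N => ?_
    rw [← ENNReal.ofReal_sum_of_nonneg fun n _ => by positivity]
    exact ENNReal.ofReal_le_ofReal (tail N)

theorem exists_tsum_rpow_hilbert_kernel_le {p α β : ℝ} (hp : 1 < p) (hα : α < p - 1)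
    (hβ : -1 < β) :
    ∃ c : ℝ, 0 < c ∧ ∀ b : ℕ → ℝ≥0∞,
      ∑' m : ℕ, ENNReal.ofReal (((m : ℝ) + 1) ^ β) *
          (∑' n : ℕ, ENNReal.ofReal (((m : ℝ) + n + 2) ^ (-(1 + (β - α) / p))) * b n) ^ p
        ≤ ENNReal.ofReal c * ∑' n : ℕ, ENNReal.ofReal (((n : ℝ) + 1) ^ α) * b n ^ p := by
  have hpq := Real.HolderConjugate.conjExponent hp
  set q := p.conjExponent
  have hp₀ : 0 < p := hpq.pos
  set s := 1 + (β - α) / p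
  -- the two Schur sums are kernel sums with `t = δ` and `t = e`; `φ n = (n + 1) ^ γ`
  set δ := -(1 + α) / p
  set e := (1 + β) / p - 1
  set γ := δ / q
  have h1β : 0 < (1 + β) / p := div_pos (by linarith) hp₀
  have hδ₁ : -1 < δ := by rw [lt_div_iff₀ hp₀]; linarith
  have hδ₂ : δ < s - 1 := by linarith [show s - 1 - δ = (1 + β) / p by ring]
  have he₁ : -1 < e := by linarith
  have he₂ : e < s - 1 := by linarith [show s - 1 - e = δ + 1 by ring]
  have hγq : γ * q = δ := div_mul_cancel₀ δ hpq.symm.pos.ne'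
  have hψe : β + (δ - s + 1) * (p - 1) = e := by
    simp only [s, δ, e]; field_simp; ring
  have hγp : e - s + 1 = α + γ * p := by
    rw [div_mul_comm, hpq.div_conj_eq_sub_one]; simp only [s, δ, e]; field_simp; ring
  obtain ⟨c₁, hc₁, hk₁⟩ := exists_tsum_ofReal_rpow_kernel_le hδ₁ hδ₂
  obtain ⟨c₂, hc₂, hk₂⟩ := exists_tsum_ofReal_rpow_kernel_le he₁ he₂
  refine ⟨c₁ ^ (p - 1) * c₂, by positivity, fun b => ?_⟩
  have hpos : ∀ n : ℕ, (0 : ℝ) < n + 1 := fun n => by positivity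
  refine (ENNReal.schur_test hpq (K := fun m n : ℕ => ENNReal.ofReal (((m : ℝ) + n + 2) ^ (-s)))
    (v := fun m => ENNReal.ofReal (((m : ℝ) + 1) ^ β))
    (ψ := fun m => ENNReal.ofReal (((m : ℝ) + 1) ^ (δ - s + 1)))
    (w := fun n => ENNReal.ofReal (((n : ℝ) + 1) ^ α))
    (φ := fun n => ENNReal.ofReal (((n : ℝ) + 1) ^ γ))
    (c₁ := ENNReal.ofReal c₁) (c₂ := ENNReal.ofReal c₂)
    (fun n => (ENNReal.ofReal_pos.2 (Real.rpow_pos_of_pos (hpos n) _)).ne')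
    (fun n => ENNReal.ofReal_ne_top) (fun m => ?_) (fun n => ?_) b).trans_eq ?_
  · rw [← ENNReal.ofReal_mul hc₁.le]
    refine le_of_eq_of_le (tsum_congr fun n => ?_) (hk₁ m)
    rw [ENNReal.ofReal_rpow_rpow (hpos n).le _ hpq.symm.pos.le, hγq,
      ENNReal.ofReal_mul (by positivity)]
  · rw [ENNReal.ofReal_rpow_rpow (hpos n).le _ hp₀.le, ← ENNReal.ofReal_mul hc₂.le,
      ← ENNReal.ofReal_mul (by positivity), mul_assoc, ← Real.rpow_add (hpos n), ← hγp]
    refine le_of_eq_of_le (tsum_congr fun m => ?_) (hk₂ n)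
    rw [ENNReal.ofReal_rpow_rpow (hpos m).le _ hpq.sub_one_pos.le,
      ← ENNReal.ofReal_mul (by positivity), ← Real.rpow_add (hpos m), hψe,
      ← ENNReal.ofReal_mul (by positivity), mul_comm, add_comm (m : ℝ)]
  · rw [ENNReal.ofReal_mul (by positivity), ENNReal.ofReal_rpow_of_pos hc₁]

theorem enorm_moment_le {μ : Measure ℝ} {C r : ℝ}
    (hmom : ∀ n : ℕ, 1 ≤ n → ∫ t in Set.Ico (0:ℝ) 1, t ^ (n - 1) ∂μ ≤ C * (n : ℝ) ^ r)
    (m n : ℕ) :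
    ‖∫ t in Set.Ico (0:ℝ) 1, t ^ (m + n + 1) ∂μ‖ₑ ≤ ENNReal.ofReal (C * ((m : ℝ) + n + 2) ^ r) := by
  have h := hmom (m + n + 2) (by omega)
  rw [show m + n + 2 - 1 = m + n + 1 by omega] at h
  push_cast at h
  rw [Real.enorm_eq_ofReal (setIntegral_nonneg measurableSet_Ico fun t ht => pow_nonneg ht.1 _)]
  exact ENNReal.ofReal_le_ofReal h

theorem stmt_5_general (p α β : ℝ) (hp : 1 < p)
    (hα' : α < p - 1) (hβ : -1 < β)
    (μ : Measure ℝ) (C : ℝ) (hC : 0 < C)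
    (hmom : ∀ n : ℕ, 1 ≤ n →
      ∫ t in Set.Ico (0:ℝ) 1, t ^ (n - 1) ∂μ ≤ C * (n : ℝ) ^ (-1 - (β - α)/p)) :
    ∃ C' : ℝ, 0 < C' ∧ ∀ a : ℕ → ℝ,
      Summable (fun n : ℕ => ((n : ℝ) + 1) ^ α * |a n| ^ p) →
      (∑' m : ℕ, ((m : ℝ) + 1) ^ β *
          |∑' n : ℕ, (∫ t in Set.Ico (0:ℝ) 1, t ^ (m + n + 1) ∂μ) * a n| ^ p) ^ (1/p)
        ≤ C' * (∑' n : ℕ, ((n : ℝ) + 1) ^ α * |a n| ^ p) ^ (1/p) := by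
  have hp₀ : 0 < p := by linarith
  obtain ⟨c, hc, hkernel⟩ := exists_tsum_rpow_hilbert_kernel_le hp hα' hβ
  refine ⟨(C ^ p * c) ^ (1 / p), by positivity, fun a ha => ?_⟩
  set K : ℕ → ℕ → ℝ≥0∞ := fun m n => ENNReal.ofReal (((m : ℝ) + n + 2) ^ (-(1 + (β - α) / p)))
  refine rpow_tsum_mul_rpow_le_of_enorm hp₀ (by positivity) (fun m => by positivity)
    (fun n => by positivity) ha ?_
  calc ∑' m : ℕ, ENNReal.ofReal (((m : ℝ) + 1) ^ β) *
        ‖∑' n : ℕ, (∫ t in Set.Ico (0:ℝ) 1, t ^ (m + n + 1) ∂μ) * a n‖ₑ ^ p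
      ≤ ∑' m : ℕ, ENNReal.ofReal (((m : ℝ) + 1) ^ β) *
          (∑' n, ENNReal.ofReal C * K m n * ‖a n‖ₑ) ^ p := by
        gcongr with m
        refine enorm_tsum_mul_le fun n => (enorm_moment_le hmom m n).trans_eq ?_
        rw [ENNReal.ofReal_mul hC.le, ← neg_add']
    _ = ENNReal.ofReal C ^ p *
          ∑' m : ℕ, ENNReal.ofReal (((m : ℝ) + 1) ^ β) * (∑' n, K m n * ‖a n‖ₑ) ^ p := by
        rw [← ENNReal.tsum_mul_left]
        refine tsum_congr fun m => ?_
        simp_rw [mul_assoc, ENNReal.tsum_mul_left]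
        rw [ENNReal.mul_rpow_of_nonneg _ _ hp₀.le]
        ring
    _ ≤ ENNReal.ofReal (C ^ p * c) *
          ∑' n : ℕ, ENNReal.ofReal (((n : ℝ) + 1) ^ α) * ‖a n‖ₑ ^ p := by
        rw [ENNReal.ofReal_mul (by positivity), ENNReal.ofReal_rpow_of_pos hC, mul_assoc]
        gcongr
        exact hkernel _

theorem stmt_5 (p α β : ℝ) (hp : 1 < p)
    (hα : -1 < α) (hα' : α < p - 1) (hβ : -1 < β) (hβ' : β < p - 1)
    (μ : Measure ℝ) [IsFiniteMeasure μ] (C : ℝ) (hC : 0 < C)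
    (hmom : ∀ n : ℕ, 1 ≤ n →
      ∫ t in Set.Ico (0:ℝ) 1, t ^ (n - 1) ∂μ ≤ C * (n : ℝ) ^ (-1 - (β - α)/p)) :
    ∃ C' : ℝ, 0 < C' ∧ ∀ a : ℕ → ℝ,
      Summable (fun n : ℕ => ((n : ℝ) + 1) ^ α * |a n| ^ p) →
      (∑' m : ℕ, ((m : ℝ) + 1) ^ β *
          |∑' n : ℕ, (∫ t in Set.Ico (0:ℝ) 1, t ^ (m + n + 1) ∂μ) * a n| ^ p) ^ (1/p)
        ≤ C' * (∑' n : ℕ, ((n : ℝ) + 1) ^ α * |a n| ^ p) ^ (1/p) :=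
  stmt_5_general p α β hp hα' hβ μ C hC hmom
end

section
/- Let p > 1, -1 < α, β < p-1, and let μ be a positive Borel measure on [0,1). If the operator H_μ(a)(m) = ∑_{n=1}^∞ μ[m+n] a_n is bounded from l^p_α to l^p_β, then μ is a (1+(β-α)/p)-Carleson measure on [0,1): there exists C > 0 such that μ([b,1)) ≤ C(1-b)^{1+(β-α)/p} for all b ∈ [0,1). -/
/-!
Test the boundedness on the finitely supported sequence `a` equal to `1` on `[N, 2N)` and `-1` on
`[2N, 3N)`. Then `(H_μ a)(m) = ∫ t^(m+N+1) (1 - t) (1 + t + ⋯ + t^(N-1))² dμ`. The factor `1 - t`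
makes `|(H_μ a)(m)| ≲ N² / (m + 1)`, so `H_μ a ∈ l^p_β` because `β < p - 1` (without this the
hypothesis says nothing, as a divergent `tsum` is `0`). On the annulus
`[1 - 1/(2N), 1 - 1/(4N))` the integrand is `≳ N` for `N ≤ m < 2N`, so
`‖H_μ a‖^p ≳ N^(1+β) (N μ(annulus))^p`, while `‖a‖^p ≲ N^(1+α)`. Hence `μ(annulus) ≲ N^(-γ)` with
`γ = 1 + (β - α)/p > 0`, and the annuli of `N, 2N, 4N, …` tile `[1 - 1/(2N), 1)`, so a geometric
series bounds `μ([1 - 1/(2N), 1))`.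
-/

open MeasureTheory Finset

lemma rpow_le_rpow_abs_mul_rpow {x y c s : ℝ} (hx : 0 < x) (hy : 0 < y)
    (hxy : x ≤ c * y) (hyx : y ≤ c * x) : x ^ s ≤ c ^ |s| * y ^ s := by
  have hc : 0 < c := pos_of_mul_pos_left (hx.trans_le hxy) hy.le
  rcases le_or_gt 0 s with hs | hs
  · rw [abs_of_nonneg hs, ← Real.mul_rpow hc.le hy.le]
    exact Real.rpow_le_rpow hx.le hxy hs
  · have hyx' : c⁻¹ * y ≤ x := by rwa [inv_mul_le_iff₀ hc]
    calc x ^ s ≤ (c⁻¹ * y) ^ s := Real.rpow_le_rpow_of_nonpos (by positivity) hyx' hs.le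
      _ = c ^ |s| * y ^ s := by
        rw [Real.mul_rpow (by positivity) hy.le, Real.inv_rpow hc.le, ← Real.rpow_neg hc.le,
          abs_of_neg hs]

lemma pow_mul_one_sub_le {t : ℝ} (h0 : 0 ≤ t) (h1 : t ≤ 1) (n : ℕ) :
    t ^ n * (1 - t) ≤ ((n : ℝ) + 1)⁻¹ := by
  have hsum : ((n : ℝ) + 1) * t ^ n ≤ ∑ i ∈ range (n + 1), t ^ i := by
    simpa using card_nsmul_le_sum (range (n + 1)) (t ^ ·) (t ^ n)
      fun i hi => pow_le_pow_of_le_one h0 h1 (Nat.lt_succ_iff.mp (mem_range.mp hi))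
  have hgeom := mul_neg_geom_sum t (n + 1)
  rw [← one_div, le_div_iff₀ (by positivity)]
  nlinarith [pow_nonneg h0 (n + 1), sub_nonneg.mpr h1]

lemma le_rpow_mul_of_rpow_one_div_le {x y c p : ℝ} (hx : 0 ≤ x) (hy : 0 ≤ y) (hc : 0 ≤ c)
    (hp : 0 < p) (h : x ^ (1 / p) ≤ c * y ^ (1 / p)) : x ≤ c ^ p * y := by
  rwa [← Real.rpow_le_rpow_iff hx (by positivity) (one_div_pos.mpr hp),
    Real.mul_rpow (by positivity) hy, ← Real.rpow_mul hc, mul_one_div_cancel hp.ne', Real.rpow_one]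

def boundaryAnnulus (N : ℕ) : Set ℝ := Set.Ico (1 - (2 * N : ℝ)⁻¹) (1 - (4 * N : ℝ)⁻¹)

lemma mem_boundaryAnnulus_iff {N : ℕ} (hN : 1 ≤ N) {t : ℝ} :
    t ∈ boundaryAnnulus N ↔ 2 * N * (1 - t) ≤ 1 ∧ 1 < 4 * N * (1 - t) := by
  have hN' : (0 : ℝ) < N := by exact_mod_cast hN
  rw [boundaryAnnulus, Set.mem_Ico, sub_le_comm, lt_sub_comm, ← mul_one (2 * N : ℝ)⁻¹,
    le_inv_mul_iff₀ (by positivity), inv_lt_iff_one_lt_mul₀' (by positivity)]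

lemma boundaryAnnulus_subset_Ico {N : ℕ} (hN : 1 ≤ N) : boundaryAnnulus N ⊆ Set.Ico 0 1 := by
  intro t ht
  obtain ⟨ht2, ht4⟩ := (mem_boundaryAnnulus_iff hN).mp ht
  have hN' : (1 : ℝ) ≤ N := by exact_mod_cast hN
  have h1t : 0 < 1 - t :=
    pos_of_mul_pos_right (by linarith : (0 : ℝ) < 4 * N * (1 - t)) (by positivity)
  constructor <;> nlinarith [mul_le_mul_of_nonneg_right hN' h1t.le]

lemma Ico_one_sub_subset_iUnion_boundaryAnnulus {N : ℕ} (hN : 1 ≤ N) :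
    Set.Ico (1 - (2 * N : ℝ)⁻¹) 1 ⊆ ⋃ k : ℕ, boundaryAnnulus (2 ^ k * N) := by
  rintro t ⟨ht, ht1⟩
  have hN' : (0 : ℝ) < N := by exact_mod_cast hN
  have hd : 0 < 1 - t := sub_pos.mpr ht1
  have hu : 2 * N * (1 - t) ≤ 1 := by
    rw [sub_le_comm, ← mul_one (2 * N : ℝ)⁻¹, le_inv_mul_iff₀ (by positivity)] at ht
    exact ht
  obtain ⟨k, hk, hk'⟩ := exists_nat_pow_near (one_le_inv₀ (by positivity) |>.mpr hu) one_lt_two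
  rw [le_inv_comm₀ (by positivity) (by positivity), ← one_div, le_div_iff₀ (by positivity)] at hk
  rw [inv_lt_iff_one_lt_mul₀' (by positivity)] at hk'
  refine Set.mem_iUnion.mpr ⟨k, (mem_boundaryAnnulus_iff ?_).mpr ?_⟩
  · exact Nat.one_le_iff_ne_zero.mpr (by positivity)
  · push_cast
    rw [pow_succ] at hk'
    constructor <;> linarith

section Carleson

variable {μ : Measure ℝ} [IsFiniteMeasure μ] {γ K : ℝ}

lemma measureReal_Ico_one_sub_le (hγ : 0 < γ)
    (h : ∀ N : ℕ, 1 ≤ N → μ.real (boundaryAnnulus N) ≤ K * (N : ℝ) ^ (-γ)) {N : ℕ} (hN : 1 ≤ N) :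
    μ.real (Set.Ico (1 - (2 * N : ℝ)⁻¹) 1) ≤ K * (1 - 2 ^ (-γ))⁻¹ * (N : ℝ) ^ (-γ) := by
  set r : ℝ := 2 ^ (-γ)
  have hr0 : 0 ≤ r := by positivity
  have hr1 : r < 1 := Real.rpow_lt_one_of_one_lt_of_neg one_lt_two (neg_neg_of_pos hγ)
  have hK : 0 ≤ K := by simpa using measureReal_nonneg.trans (h 1 le_rfl)
  have hterm (k : ℕ) :
      μ (boundaryAnnulus (2 ^ k * N)) ≤ ENNReal.ofReal (K * N ^ (-γ) * r ^ k) := by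
    rw [ENNReal.le_ofReal_iff_toReal_le (measure_ne_top _ _) (by positivity)]
    refine (h (2 ^ k * N) (Nat.one_le_iff_ne_zero.mpr (by positivity))).trans_eq ?_
    push_cast
    rw [Real.mul_rpow (by positivity) (by positivity), ← Real.rpow_pow_comm zero_le_two]
    ring
  refine ENNReal.toReal_le_of_le_ofReal (by positivity) ?_
  calc μ (Set.Ico (1 - (2 * N : ℝ)⁻¹) 1) ≤ μ (⋃ k : ℕ, boundaryAnnulus (2 ^ k * N)) :=
        measure_mono (Ico_one_sub_subset_iUnion_boundaryAnnulus hN)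
    _ ≤ ∑' k : ℕ, μ (boundaryAnnulus (2 ^ k * N)) := measure_iUnion_le _
    _ ≤ ∑' k : ℕ, ENNReal.ofReal (K * N ^ (-γ) * r ^ k) := ENNReal.tsum_le_tsum hterm
    _ = ENNReal.ofReal (K * (1 - r)⁻¹ * N ^ (-γ)) := by
        rw [← ENNReal.ofReal_tsum_of_nonneg (fun k => by positivity)
          ((summable_geometric_of_lt_one hr0 hr1).mul_left _), tsum_mul_left,
          tsum_geometric_of_lt_one hr0 hr1, mul_right_comm]

lemma exists_carleson_of_measureReal_boundaryAnnulus_le (hγ : 0 < γ)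
    (h : ∀ N : ℕ, 1 ≤ N → μ.real (boundaryAnnulus N) ≤ K * (N : ℝ) ^ (-γ)) :
    ∃ C > 0, ∀ b : ℝ, 0 ≤ b → b < 1 → μ.real (Set.Ico b 1) ≤ C * (1 - b) ^ γ := by
  set K' := K * (1 - 2 ^ (-γ))⁻¹
  have hK' : 0 ≤ K' := by
    simpa using measureReal_nonneg.trans (measureReal_Ico_one_sub_le hγ h le_rfl)
  refine ⟨K' * 4 ^ γ + μ.real Set.univ * 2 ^ γ + 1, by positivity, fun b hb0 hb1 => ?_⟩
  have hbγ : 0 ≤ (1 - b) ^ γ := by bound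
  rcases lt_or_ge b (1 / 2) with hb | hb
  · have h2 : 1 ≤ 2 ^ γ * (1 - b) ^ γ := by
      rw [← Real.mul_rpow zero_le_two (by linarith)]
      exact Real.one_le_rpow (by linarith) hγ.le
    calc μ.real (Set.Ico b 1) ≤ μ.real Set.univ := measureReal_mono (Set.subset_univ _)
      _ ≤ μ.real Set.univ * (2 ^ γ * (1 - b) ^ γ) := le_mul_of_one_le_right measureReal_nonneg h2
      _ ≤ (K' * 4 ^ γ + μ.real Set.univ * 2 ^ γ + 1) * (1 - b) ^ γ := by
        nlinarith [mul_nonneg hK' (Real.rpow_nonneg zero_le_four γ)]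
  · have hb' : b ∈ Set.Ico (1 - (2 * (1 : ℕ) : ℝ)⁻¹) 1 := by
      norm_num; constructor <;> linarith
    obtain ⟨k, hk⟩ := Set.mem_iUnion.mp (Ico_one_sub_subset_iUnion_boundaryAnnulus le_rfl hb')
    rw [mul_one] at hk
    have hM : 1 ≤ 2 ^ k := Nat.one_le_two_pow
    set M := 2 ^ k
    have hMpos : (0 : ℝ) < M := by exact_mod_cast hM
    have hMb : (M : ℝ)⁻¹ ≤ 4 * (1 - b) := by
      rw [inv_le_iff_one_le_mul₀ hMpos]
      linarith [((mem_boundaryAnnulus_iff hM).mp hk).2]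
    calc μ.real (Set.Ico b 1) ≤ μ.real (Set.Ico (1 - (2 * M : ℝ)⁻¹) 1) :=
          measureReal_mono (Set.Ico_subset_Ico_left hk.1)
      _ ≤ K' * (M : ℝ) ^ (-γ) := measureReal_Ico_one_sub_le hγ h hM
      _ ≤ K' * (4 ^ γ * (1 - b) ^ γ) := by
        rw [Real.rpow_neg hMpos.le, ← Real.inv_rpow hMpos.le,
          ← Real.mul_rpow zero_le_four (by linarith)]
        gcongr
      _ ≤ (K' * 4 ^ γ + μ.real Set.univ * 2 ^ γ + 1) * (1 - b) ^ γ := by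
        rw [← mul_assoc]
        gcongr
        linarith [mul_nonneg (measureReal_nonneg (μ := μ) (s := Set.univ))
          (Real.rpow_nonneg zero_le_two γ)]

end Carleson

-- Indices start at `0`: the entry `(m, n)` is the paper's `μ[(m+1) + (n+1)] = ∫ t^(m+n+1) dμ`.
noncomputable def hankel (μ : Measure ℝ) (a : ℕ → ℝ) (m : ℕ) : ℝ :=
  ∑' n : ℕ, (∫ t in Set.Ico (0:ℝ) 1, t ^ (m + n + 1) ∂μ) * a n

noncomputable def weightedPowSum (s p : ℝ) (a : ℕ → ℝ) : ℝ :=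
  ∑' n : ℕ, ((n : ℝ) + 1) ^ s * |a n| ^ p

def HankelBoundedWith (μ : Measure ℝ) (p α β C : ℝ) : Prop :=
  ∀ a : ℕ → ℝ, Summable (fun n : ℕ => ((n : ℝ) + 1) ^ α * |a n| ^ p) →
    weightedPowSum β p (hankel μ a) ^ (1 / p) ≤ C * weightedPowSum α p a ^ (1 / p)

lemma weightedPowSum_nonneg (s p : ℝ) (a : ℕ → ℝ) : 0 ≤ weightedPowSum s p a :=
  tsum_nonneg fun n => by positivity

lemma summable_weighted_rpow_of_abs_le {β p c : ℝ} (hp : 0 ≤ p) (hβp : β - p < -1) {h : ℕ → ℝ}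
    (hc : ∀ m, |h m| ≤ c * ((m : ℝ) + 1)⁻¹) :
    Summable (fun m : ℕ => ((m : ℝ) + 1) ^ β * |h m| ^ p) := by
  have hc0 : 0 ≤ c := by simpa using (abs_nonneg _).trans (hc 0)
  have hs : Summable (fun m : ℕ => ((m : ℝ) + 1) ^ (β - p)) := by
    simpa using (summable_nat_add_iff 1).mpr (Real.summable_nat_rpow.mpr hβp)
  refine Summable.of_nonneg_of_le (fun m => by positivity) (fun m => ?_) (hs.mul_left (c ^ p))
  calc ((m : ℝ) + 1) ^ β * |h m| ^ p ≤ ((m : ℝ) + 1) ^ β * (c * ((m : ℝ) + 1)⁻¹) ^ p := by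
        gcongr; exact hc m
    _ = c ^ p * ((m : ℝ) + 1) ^ (β - p) := by
        rw [Real.mul_rpow hc0 (by positivity), Real.inv_rpow (by positivity),
          Real.rpow_sub (by positivity)]
        ring

def testSeq (N n : ℕ) : ℝ :=
  if n < N then 0 else if n < 2 * N then 1 else if n < 3 * N then -1 else 0

def testKernel (N m : ℕ) (t : ℝ) : ℝ :=
  t ^ (m + N + 1) * (1 - t) * (∑ j ∈ range N, t ^ j) ^ 2

lemma testSeq_eq_zero {N n : ℕ} (hn : 3 * N ≤ n) : testSeq N n = 0 := by
  simp only [testSeq]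
  split_ifs <;> first | rfl | omega

lemma abs_testSeq (N n : ℕ) : |testSeq N n| = if n ∈ Finset.Ico N (3 * N) then 1 else 0 := by
  simp only [testSeq, Finset.mem_Ico]
  split_ifs <;> first | omega | simp

lemma sum_pow_mul_testSeq (N : ℕ) (t : ℝ) :
    ∑ n ∈ range (3 * N), t ^ n * testSeq N n = t ^ N * (1 - t) * (∑ j ∈ range N, t ^ j) ^ 2 := by
  rw [show 3 * N = N + N + N by ring, sum_range_add, sum_range_add,
    sum_eq_zero fun n hn => by simp [testSeq, mem_range.mp hn]]
  have h1 : ∀ j ∈ range N, t ^ (N + j) * testSeq N (N + j) = t ^ N * t ^ j := fun j hj => by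
    simp [testSeq, pow_add, show N + j < 2 * N by have := mem_range.mp hj; omega]
  have h2 : ∀ j ∈ range N, t ^ (N + N + j) * testSeq N (N + N + j) = -(t ^ N * t ^ N * t ^ j) :=
    fun j hj => by
      have := mem_range.mp hj
      rw [testSeq, if_neg (by omega), if_neg (by omega), if_pos (by omega), pow_add, pow_add]
      ring
  rw [sum_congr rfl h1, sum_congr rfl h2, sum_neg_distrib, ← mul_sum, ← mul_sum]
  linear_combination -(t ^ N * ∑ j ∈ range N, t ^ j) * mul_neg_geom_sum t N

lemma testKernel_nonneg (N m : ℕ) {t : ℝ} (ht : t ∈ Set.Icc (0 : ℝ) 1) : 0 ≤ testKernel N m t := by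
  obtain ⟨h0, h1⟩ := ht
  have : 0 ≤ 1 - t := sub_nonneg.mpr h1
  unfold testKernel
  positivity

lemma testKernel_le (N m : ℕ) {t : ℝ} (ht : t ∈ Set.Icc (0 : ℝ) 1) :
    testKernel N m t ≤ N ^ 2 * ((m : ℝ) + 1)⁻¹ := by
  obtain ⟨h0, h1⟩ := ht
  have hgeom : ∑ j ∈ range N, t ^ j ≤ N := by
    simpa using sum_le_card_nsmul (range N) (t ^ ·) 1 fun j _ => pow_le_one₀ h0 h1
  have h1t : 0 ≤ 1 - t := sub_nonneg.mpr h1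
  calc testKernel N m t ≤ t ^ m * (1 - t) * N ^ 2 :=
        mul_le_mul (mul_le_mul_of_nonneg_right (pow_le_pow_of_le_one h0 h1 (by omega)) h1t)
          (pow_le_pow_left₀ (sum_nonneg fun j _ => pow_nonneg h0 j) hgeom 2) (sq_nonneg _)
          (by positivity)
    _ ≤ ((m : ℝ) + 1)⁻¹ * N ^ 2 := by gcongr; exact pow_mul_one_sub_le h0 h1 m
    _ = N ^ 2 * ((m : ℝ) + 1)⁻¹ := mul_comm _ _

lemma le_testKernel_of_mem_boundaryAnnulus {N m : ℕ} (hN : 1 ≤ N) (hm : m < 3 * N) {t : ℝ}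
    (ht : t ∈ boundaryAnnulus N) : (N : ℝ) / 256 ≤ testKernel N m t := by
  obtain ⟨ht2, ht4⟩ := (mem_boundaryAnnulus_iff hN).mp ht
  have hN' : (0 : ℝ) < N := by exact_mod_cast hN
  obtain ⟨h0, h1⟩ := boundaryAnnulus_subset_Ico hN ht
  replace h1 := h1.le
  have htN : 1 / 2 ≤ t ^ N := by
    nlinarith [one_add_mul_sub_le_pow (show (-1 : ℝ) ≤ t by linarith) N]
  have hgeom : (N : ℝ) * t ^ N ≤ ∑ j ∈ range N, t ^ j := by
    simpa using card_nsmul_le_sum (range N) (t ^ ·) (t ^ N)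
      fun j hj => pow_le_pow_of_le_one h0 h1 (mem_range.mp hj).le
  have hpow : (1 / 2) ^ 4 ≤ t ^ (m + N + 1) :=
    calc (1 / 2 : ℝ) ^ 4 ≤ (t ^ N) ^ 4 := by gcongr
      _ = t ^ (4 * N) := by rw [← pow_mul, mul_comm]
      _ ≤ t ^ (m + N + 1) := pow_le_pow_of_le_one h0 h1 (by omega)
  calc (N : ℝ) / 256 = (1 / 2) ^ 4 * (4 * (N : ℝ))⁻¹ * (N * (1 / 2)) ^ 2 := by field_simp; ring
    _ ≤ testKernel N m t := by
      unfold testKernel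
      gcongr
      · rw [inv_le_iff_one_le_mul₀ (by positivity)]; linarith
      · nlinarith

lemma hasSum_weighted_testSeq {α p : ℝ} (hp : p ≠ 0) (N : ℕ) :
    HasSum (fun n : ℕ => ((n : ℝ) + 1) ^ α * |testSeq N n| ^ p)
      (∑ n ∈ Finset.Ico N (3 * N), ((n : ℝ) + 1) ^ α) := by
  have key (n : ℕ) : ((n : ℝ) + 1) ^ α * |testSeq N n| ^ p =
      if n ∈ Finset.Ico N (3 * N) then ((n : ℝ) + 1) ^ α else 0 := by
    rw [abs_testSeq]; split_ifs <;> simp [Real.zero_rpow hp]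
  simp_rw [key]
  rw [sum_congr rfl fun n hn => (if_pos hn).symm]
  exact hasSum_sum_of_ne_finset_zero fun n hn => if_neg hn

lemma weightedPowSum_testSeq_le {α p : ℝ} (hp : p ≠ 0) {N : ℕ} (hN : 1 ≤ N) :
    weightedPowSum α p (testSeq N) ≤ 2 * N * (4 ^ |α| * (N : ℝ) ^ α) := by
  have hN' : (0 : ℝ) < N := by exact_mod_cast hN
  rw [weightedPowSum, (hasSum_weighted_testSeq hp N).tsum_eq]
  calc ∑ n ∈ Finset.Ico N (3 * N), ((n : ℝ) + 1) ^ α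
      ≤ (Finset.Ico N (3 * N)).card • (4 ^ |α| * (N : ℝ) ^ α) := by
        refine sum_le_card_nsmul _ _ _ fun n hn => ?_
        have hn' := Finset.mem_Ico.mp hn
        refine rpow_le_rpow_abs_mul_rpow (by positivity) hN' ?_ ?_
        · have : n + 1 ≤ 4 * N := by omega
          exact_mod_cast this
        · have : N ≤ 4 * (n + 1) := by omega
          exact_mod_cast this
    _ = 2 * N * (4 ^ |α| * (N : ℝ) ^ α) := by
        rw [Nat.card_Ico, nsmul_eq_mul, show 3 * N - N = 2 * N by omega]
        push_cast; ring

section Hankel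

variable {μ : Measure ℝ} [IsFiniteMeasure μ] {p α β : ℝ}

lemma hankel_testSeq (N m : ℕ) :
    hankel μ (testSeq N) m = ∫ t in Set.Ico (0:ℝ) 1, testKernel N m t ∂μ := by
  have hint (k : ℕ) : IntegrableOn (fun t : ℝ => t ^ k) (Set.Ico 0 1) μ :=
    (continuous_pow k).integrableOn_Icc.mono_set Set.Ico_subset_Icc_self
  rw [hankel, tsum_eq_sum (s := range (3 * N)) fun n hn => by
    rw [testSeq_eq_zero (by simpa using hn), mul_zero]]
  simp_rw [← integral_mul_const]
  rw [← integral_finsetSum _ fun n _ => (hint _).mul_const _]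
  refine setIntegral_congr_fun measurableSet_Ico fun t _ => ?_
  calc ∑ n ∈ range (3 * N), t ^ (m + n + 1) * testSeq N n
      = t ^ (m + 1) * ∑ n ∈ range (3 * N), t ^ n * testSeq N n := by
        rw [mul_sum]; refine sum_congr rfl fun n _ => by ring
    _ = testKernel N m t := by rw [sum_pow_mul_testSeq, testKernel]; ring

lemma integrableOn_testKernel (N m : ℕ) : IntegrableOn (testKernel N m) (Set.Ico 0 1) μ :=
  (by unfold testKernel; fun_prop : Continuous (testKernel N m)).integrableOn_Icc.mono_set
    Set.Ico_subset_Icc_self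

lemma abs_hankel_testSeq_le (N m : ℕ) :
    |hankel μ (testSeq N) m| ≤ N ^ 2 * μ.real (Set.Ico 0 1) * ((m : ℝ) + 1)⁻¹ := by
  rw [hankel_testSeq, ← Real.norm_eq_abs, mul_right_comm]
  refine norm_setIntegral_le_of_norm_le_const (measure_lt_top _ _) fun t ht => ?_
  rw [Real.norm_eq_abs, abs_of_nonneg (testKernel_nonneg N m (Set.Ico_subset_Icc_self ht))]
  exact testKernel_le N m (Set.Ico_subset_Icc_self ht)

lemma le_hankel_testSeq {N m : ℕ} (hN : 1 ≤ N) (hm : m < 3 * N) :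
    (N : ℝ) / 256 * μ.real (boundaryAnnulus N) ≤ hankel μ (testSeq N) m := by
  rw [hankel_testSeq]
  calc (N : ℝ) / 256 * μ.real (boundaryAnnulus N)
        ≤ ∫ t in boundaryAnnulus N, testKernel N m t ∂μ :=
        setIntegral_ge_of_const_le_real measurableSet_Ico (measure_ne_top _ _)
          (fun t ht => le_testKernel_of_mem_boundaryAnnulus hN hm ht)
          (integrableOn_testKernel N m |>.mono_set (boundaryAnnulus_subset_Ico hN))
    _ ≤ ∫ t in Set.Ico 0 1, testKernel N m t ∂μ :=
        setIntegral_mono_set (integrableOn_testKernel N m)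
          ((ae_restrict_iff' measurableSet_Ico).mpr (.of_forall fun t ht =>
            testKernel_nonneg N m (Set.Ico_subset_Icc_self ht)))
          (boundaryAnnulus_subset_Ico hN).eventuallyLE

lemma le_weightedPowSum_hankel_testSeq (hp : 1 < p) (hβ : β < p - 1) {N : ℕ} (hN : 1 ≤ N) :
    N * (N ^ β * ((N : ℝ) / 256 * μ.real (boundaryAnnulus N)) ^ p) ≤
      2 ^ |β| * weightedPowSum β p (hankel μ (testSeq N)) := by
  have hN' : (0 : ℝ) < N := by exact_mod_cast hN
  set X := (N : ℝ) / 256 * μ.real (boundaryAnnulus N)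
  set f := fun m : ℕ => ((m : ℝ) + 1) ^ β * |hankel μ (testSeq N) m| ^ p
  have hsum : Summable f :=
    summable_weighted_rpow_of_abs_le (by linarith) (by linarith) (abs_hankel_testSeq_le N)
  have hterm : ∀ m ∈ Finset.Ico N (2 * N), (N : ℝ) ^ β * X ^ p ≤ 2 ^ |β| * f m := by
    intro m hm
    have hm' := Finset.mem_Ico.mp hm
    have hweight : (N : ℝ) ^ β ≤ 2 ^ |β| * ((m : ℝ) + 1) ^ β := by
      refine rpow_le_rpow_abs_mul_rpow hN' (by positivity) ?_ ?_
      · have : N ≤ 2 * (m + 1) := by omega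
        exact_mod_cast this
      · have : m + 1 ≤ 2 * N := by omega
        exact_mod_cast this
    have hX : X ^ p ≤ |hankel μ (testSeq N) m| ^ p :=
      Real.rpow_le_rpow (by positivity) ((le_hankel_testSeq hN (by omega)).trans (le_abs_self _))
        (by linarith)
    calc (N : ℝ) ^ β * X ^ p ≤ 2 ^ |β| * ((m : ℝ) + 1) ^ β * |hankel μ (testSeq N) m| ^ p :=
          mul_le_mul hweight hX (by positivity) (by positivity)
      _ = 2 ^ |β| * f m := mul_assoc _ _ _
  calc (N : ℝ) * (N ^ β * X ^ p) = (Finset.Ico N (2 * N)).card • ((N : ℝ) ^ β * X ^ p) := by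
        rw [Nat.card_Ico, nsmul_eq_mul, show 2 * N - N = N by omega]
    _ ≤ ∑ m ∈ Finset.Ico N (2 * N), 2 ^ |β| * f m := card_nsmul_le_sum _ _ _ hterm
    _ = 2 ^ |β| * ∑ m ∈ Finset.Ico N (2 * N), f m := (mul_sum _ _ _).symm
    _ ≤ 2 ^ |β| * weightedPowSum β p (hankel μ (testSeq N)) := by
        gcongr
        exact hsum.sum_le_tsum _ fun m _ => by positivity

lemma measureReal_boundaryAnnulus_le {C : ℝ} (hp : 1 < p) (hβ : β < p - 1) (hC : 0 ≤ C)
    (hbdd : HankelBoundedWith μ p α β C) {N : ℕ} (hN : 1 ≤ N) :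
    μ.real (boundaryAnnulus N) ≤
      256 * C * (2 ^ (1 + |β|) * 4 ^ |α|) ^ (1 / p) * (N : ℝ) ^ (-(1 + (β - α) / p)) := by
  have hN' : (0 : ℝ) < N := by exact_mod_cast hN
  have hp0 : 0 < p := by linarith
  set X := (N : ℝ) / 256 * μ.real (boundaryAnnulus N)
  set M : ℝ := 2 ^ (1 + |β|) * 4 ^ |α|
  have hbound := le_rpow_mul_of_rpow_one_div_le (weightedPowSum_nonneg _ _ _)
    (weightedPowSum_nonneg _ _ _) hC hp0 (hbdd _ (hasSum_weighted_testSeq hp0.ne' N).summable)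
  have hpowers : N * (N ^ β * X ^ p) ≤ N * (N ^ β * (C ^ p * M * N ^ (α - β))) := by
    calc _ ≤ 2 ^ |β| * weightedPowSum β p (hankel μ (testSeq N)) :=
          le_weightedPowSum_hankel_testSeq hp hβ hN
      _ ≤ 2 ^ |β| * (C ^ p * (2 * N * (4 ^ |α| * (N : ℝ) ^ α))) := by
          gcongr
          exact hbound.trans (by gcongr; exact weightedPowSum_testSeq_le hp0.ne' hN)
      _ = N * (N ^ β * (C ^ p * M * N ^ (α - β))) := by
          simp only [M]
          rw [Real.rpow_add zero_lt_two, Real.rpow_one, Real.rpow_sub hN']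
          field_simp
  have hpow : (C * M ^ (1 / p) * N ^ ((α - β) / p)) ^ p = C ^ p * M * N ^ (α - β) := by
    rw [Real.mul_rpow (by positivity) (by positivity), Real.mul_rpow hC (by positivity),
      ← Real.rpow_mul (by positivity), ← Real.rpow_mul hN'.le, one_div_mul_cancel hp0.ne',
      Real.rpow_one, div_mul_cancel₀ _ hp0.ne']
  have hX : X ≤ C * M ^ (1 / p) * N ^ ((α - β) / p) := by
    rw [← Real.rpow_le_rpow_iff (by positivity) (by positivity) hp0, hpow]
    exact le_of_mul_le_mul_left (le_of_mul_le_mul_left hpowers hN') (by positivity)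
  calc μ.real (boundaryAnnulus N) = 256 * X * (N : ℝ) ^ (-1 : ℝ) := by
        simp only [X, Real.rpow_neg_one]; field_simp
    _ ≤ 256 * (C * M ^ (1 / p) * N ^ ((α - β) / p)) * (N : ℝ) ^ (-1 : ℝ) := by gcongr
    _ = 256 * C * M ^ (1 / p) * (N : ℝ) ^ (-(1 + (β - α) / p)) := by
        rw [mul_assoc, mul_assoc, ← Real.rpow_add hN']
        ring_nf

end Hankel

theorem stmt_6_general (p α β : ℝ) (hp : 1 < p)
    (hα' : α < p - 1) (hβ : -1 < β) (hβ' : β < p - 1)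
    (μ : Measure ℝ) [IsFiniteMeasure μ]
    (hbdd : ∃ C' : ℝ, 0 < C' ∧ ∀ a : ℕ → ℝ,
      Summable (fun n : ℕ => ((n : ℝ) + 1) ^ α * |a n| ^ p) →
      (∑' m : ℕ, ((m : ℝ) + 1) ^ β *
          |∑' n : ℕ, (∫ t in Set.Ico (0:ℝ) 1, t ^ (m + n + 1) ∂μ) * a n| ^ p) ^ (1/p)
        ≤ C' * (∑' n : ℕ, ((n : ℝ) + 1) ^ α * |a n| ^ p) ^ (1/p)) :
    ∃ C : ℝ, 0 < C ∧ ∀ b : ℝ, 0 ≤ b → b < 1 →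
      (μ (Set.Ico b 1)).toReal ≤ C * (1 - b) ^ (1 + (β - α)/p) := by
  obtain ⟨C', hC', hC'bdd⟩ := hbdd
  have hγ : 0 < 1 + (β - α) / p := by
    have : -1 < (β - α) / p := by rw [lt_div_iff₀ (by linarith)]; linarith
    linarith
  exact exists_carleson_of_measureReal_boundaryAnnulus_le hγ fun N hN =>
    measureReal_boundaryAnnulus_le hp hβ' hC'.le hC'bdd hN

theorem stmt_6 (p α β : ℝ) (hp : 1 < p)
    (hα : -1 < α) (hα' : α < p - 1) (hβ : -1 < β) (hβ' : β < p - 1)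
    (μ : Measure ℝ) [IsFiniteMeasure μ]
    (hbdd : ∃ C' : ℝ, 0 < C' ∧ ∀ a : ℕ → ℝ,
      Summable (fun n : ℕ => ((n : ℝ) + 1) ^ α * |a n| ^ p) →
      (∑' m : ℕ, ((m : ℝ) + 1) ^ β *
          |∑' n : ℕ, (∫ t in Set.Ico (0:ℝ) 1, t ^ (m + n + 1) ∂μ) * a n| ^ p) ^ (1/p)
        ≤ C' * (∑' n : ℕ, ((n : ℝ) + 1) ^ α * |a n| ^ p) ^ (1/p)) :
    ∃ C : ℝ, 0 < C ∧ ∀ b : ℝ, 0 ≤ b → b < 1 →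
      (μ (Set.Ico b 1)).toReal ≤ C * (1 - b) ^ (1 + (β - α)/p) :=
  stmt_6_general p α β hp hα' hβ hβ' μ hbdd
end
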